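/- Let G = Alt(6), let H₁ be the stabilizer of the point 1 in the natural action of G on {1,…,6}, and let H₂ be a subgroup of G isomorphic to Alt(5) that acts transitively on {1,…,6}. Let π₁ and π₂ be the faithful permutation representations of G of degree 6 given by left multiplication on the coset spaces G/H₁ and G/H₂, respectively. Then π₁(G) = π₂(G) as subgroups of Sym(6); in particular, the permutation polytopes satisfy P(π₁) = P(π₂), and both equal the convex hull of the 6×6 even permutation matrices. Nevertheless, π₁ and π₂ are not stably equivalent as G-representations. -/

import Mathlib

open Finset

/-- The permutation matrix of `σ`: `(M_σ)_{ij} = 1` if `i = σ j` and `0` otherwise. -/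
def permMat (n : ℕ) (σ : Equiv.Perm (Fin n)) : Matrix (Fin n) (Fin n) ℝ :=
  Matrix.of fun i j => if i = σ j then 1 else 0

lemma permMat_one (n : ℕ) : permMat n 1 = 1 := by
  ext i j; simp [permMat, Matrix.one_apply]; congr

lemma permMat_mul (n : ℕ) (σ τ : Equiv.Perm (Fin n)) :
    permMat n (σ * τ) = permMat n σ * permMat n τ := by
  ext i j
  simp only [permMat, Matrix.mul_apply, Matrix.of_apply, Equiv.Perm.mul_apply]
  rw [Finset.sum_eq_single (τ j)]
  · simp; congr
  · intro k _ hk; simp [hk]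
  · simp

/-- The matrix representation `Π : G → GL_n(ℝ)`, `g ↦ M_{π(g)}`, acting on `ℝⁿ`. -/
noncomputable def permRep (n : ℕ) {G : Type} [Group G] (π : G →* Equiv.Perm (Fin n)) :
    Representation ℝ G (Fin n → ℝ) where
  toFun g := (permMat n (π g)).mulVecLin
  map_one' := by simp [permMat_one]; rfl
  map_mul' g h := by simp [permMat_mul]; rfl

/-- Relabelling of a symmetric group along a bijection, as a group homomorphism. -/
def permCongrHom {α β : Type} (e : α ≃ β) : Equiv.Perm α →* Equiv.Perm β where
  toFun σ := (e.symm.trans σ).trans e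
  map_one' := by ext x; simp
  map_mul' σ τ := by ext x; simp

variable {G : Type} [Group G] [Fintype G]

/-- The affine kernel `ker°ρ` of a real representation `ρ` of `G`. -/
def affKer {V : Type} [AddCommGroup V] [Module ℝ V]
    (ρ : Representation ℝ G V) : Set (G → ℝ) :=
  {l | (∑ g : G, l g • (ρ g : V →ₗ[ℝ] V)) = 0 ∧ (∑ g : G, l g) = 0}

/-- Direct sum (realized on the product space) of two representations. -/
def prodRep {V W : Type} [AddCommGroup V] [Module ℝ V] [AddCommGroup W] [Module ℝ W]
    (ρ : Representation ℝ G V) (σ : Representation ℝ G W) :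
    Representation ℝ G (V × W) where
  toFun g := (ρ g).prodMap (σ g)
  map_one' := by ext <;> simp
  map_mul' g h := by ext <;> simp

/-- Isomorphism of `G`-representations. -/
def RepIso {V W : Type} [AddCommGroup V] [Module ℝ V] [AddCommGroup W] [Module ℝ W]
    (ρ : Representation ℝ G V) (σ : Representation ℝ G W) : Prop :=
  ∃ e : V ≃ₗ[ℝ] W, ∀ (g : G) (v : V), e (ρ g v) = σ g (e v)

/-- Stable equivalence of real representations. -/
def StablyEquivalent {V W : Type} [AddCommGroup V] [Module ℝ V] [AddCommGroup W] [Module ℝ W]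
    (ρ₁ : Representation ℝ G V) (ρ₂ : Representation ℝ G W) : Prop :=
  ∃ (V' : Type) (_ : AddCommGroup V') (_ : Module ℝ V') (ρ₁' : Representation ℝ G V')
    (W' : Type) (_ : AddCommGroup W') (_ : Module ℝ W') (ρ₂' : Representation ℝ G W'),
    affKer ρ₁ ⊆ affKer ρ₁' ∧ affKer ρ₂ ⊆ affKer ρ₂' ∧
    RepIso (prodRep ρ₁ ρ₁') (prodRep ρ₂ ρ₂')

/-!
Since `A₆` is simple, its action on the cosets of a proper subgroup is faithful, and a copy of
`A₆` inside `Sym(6)` is the alternating group because every map `A₆ → {±1}` is trivial (3-cycles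
are squares). So both representations have image `Alt(6)`, and the polytopes agree.

Because `H₂` is transitive, `A₆ = H₂ H₁`, i.e. `A₆` is transitive on `A₆/H₁ × A₆/H₂`. Take for
`λ(g) = #fix(g, A₆/H₂) - 1` the character of the deleted permutation module of `π₂`. Double
counting over the transitive action on pairs shows that `∑_{g x = y} λ(g) = 0` for all cosets
`x, y` of `H₁`, i.e. `λ ∈ ker° π₁`; but the diagonal sums `∑_{g y = y} λ(g)` for `π₂` are
positive, so `λ ∉ ker° π₂`. Stable equivalence would force `ker° π₁ ⊆ ker° π₂`.
-/

open MulAction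

lemma alternatingGroup.monoidHom_units_int_eq_one {α : Type*} [Fintype α] [DecidableEq α]
    (f : alternatingGroup α →* ℤˣ) : f = 1 := by
  refine MonoidHom.eq_of_eqOn_dense alternatingGroup.closure_isThreeCycles_eq_top fun σ hσ => ?_
  -- a 3-cycle is the square of its own square, and every unit of `ℤ` squares to `1`
  have hσ3 : σ ^ 3 = 1 := by
    rw [← orderOf_dvd_iff_pow_eq_one, ← Subgroup.orderOf_coe,
      (show Equiv.Perm.IsThreeCycle (σ : Equiv.Perm α) from hσ).orderOf]
  calc f σ = f (σ ^ 2) ^ 2 := by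
        rw [← map_pow, ← pow_mul, show 2 * 2 = 3 + 1 from rfl, pow_succ, hσ3, one_mul]
    _ = 1 := Int.units_sq _

lemma range_eq_alternatingGroup_of_injective {α : Type*} [Fintype α] [DecidableEq α]
    (π : alternatingGroup α →* Equiv.Perm α) (hπ : Function.Injective π) :
    π.range = alternatingGroup α := by
  have hle : π.range ≤ alternatingGroup α := by
    rintro _ ⟨g, rfl⟩
    exact Equiv.Perm.mem_alternatingGroup.2
      (DFunLike.congr_fun (alternatingGroup.monoidHom_units_int_eq_one (Equiv.Perm.sign.comp π)) g)
  exact Subgroup.eq_of_le_of_card_ge hle (Nat.card_range_of_injective hπ).ge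

section Cosets

variable {Γ : Type*} [Group Γ]

lemma injective_toPermHom_quotient [IsSimpleGroup Γ] (H : Subgroup Γ) [Nontrivial (Γ ⧸ H)] :
    Function.Injective (toPermHom Γ (Γ ⧸ H)) := by
  rw [← MonoidHom.ker_eq_bot_iff, ← Subgroup.normalCore_eq_ker]
  refine H.normalCore_normal.eq_bot_or_eq_top.resolve_right fun htop => ?_
  obtain rfl : H = ⊤ := top_le_iff.1 (htop ▸ H.normalCore_le)
  exact not_subsingleton _ (QuotientGroup.subsingleton_quotient_top (G := Γ))

lemma isPretransitive_prod_quotient {H K : Subgroup Γ}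
    (hHK : ∀ g : Γ, ∃ k ∈ K, ∃ h ∈ H, g = k * h) : IsPretransitive Γ ((Γ ⧸ H) × (Γ ⧸ K)) := by
  refine (isPretransitive_iff_base (G := Γ) (((1 : Γ) : Γ ⧸ H), ((1 : Γ) : Γ ⧸ K))).2
    fun ⟨p, q⟩ => ?_
  induction p using QuotientGroup.induction_on with | H x => ?_
  induction q using QuotientGroup.induction_on with | H y => ?_
  obtain ⟨k, hk, h, hh, hyx⟩ := hHK (y⁻¹ * x)
  refine ⟨y * k, Prod.ext ?_ ?_⟩
  · rw [Prod.smul_fst, Quotient.smul_mk, smul_eq_mul, mul_one, QuotientGroup.eq, mul_inv_rev,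
      mul_assoc, hyx, inv_mul_cancel_left]
    exact hh
  · rw [Prod.smul_snd, Quotient.smul_mk, smul_eq_mul, mul_one, QuotientGroup.eq, mul_inv_rev,
      mul_assoc, inv_mul_cancel, mul_one]
    exact K.inv_mem hk

lemma exists_mul_eq_of_forall_mem_iff_smul_eq {α : Type*} [MulAction Γ α] {a : α}
    {H K : Subgroup Γ} (hH : ∀ g, g ∈ H ↔ g • a = a) (hK : ∀ b, ∃ k ∈ K, k • a = b) (g : Γ) :
    ∃ k ∈ K, ∃ h ∈ H, g = k * h := by
  obtain ⟨k, hk, hka⟩ := hK (g • a)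
  refine ⟨k, hk, k⁻¹ * g, (hH _).2 ?_, by group⟩
  rw [mul_smul, ← hka, inv_smul_smul]

end Cosets

lemma permCongrHom_injective {α β : Type} (e : α ≃ β) : Function.Injective (permCongrHom e) :=
  fun _ _ h => e.permCongr.injective h

lemma range_permMat_comp {Γ : Type*} [Group Γ] {n : ℕ} (π : Γ →* Equiv.Perm (Fin n)) :
    Set.range (fun g => permMat n (π g)) = {M | ∃ σ ∈ π.range, M = permMat n σ} := by
  ext M
  simp [eq_comm]

section Counting

variable {X Y : Type*} [MulAction G X] [MulAction G Y] [DecidableEq X] [DecidableEq Y]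

lemma card_filter_smul_eq_eq [IsPretransitive G X] (x y x' y' : X) :
    #{g : G | g • x = y} = #{g : G | g • x' = y'} := by
  obtain ⟨s, hs⟩ := exists_smul_eq G x' x
  obtain ⟨t, ht⟩ := exists_smul_eq G y y'
  refine Finset.card_nbij' (fun g => t * g * s) (fun g => t⁻¹ * g * s⁻¹) ?_ ?_ ?_ ?_
  · intro g hg
    simp only [Finset.coe_filter, Finset.mem_univ, true_and, Set.mem_ofPred_eq] at hg ⊢
    rw [mul_smul, mul_smul, hs, hg, ht]
  · intro g hg
    simp only [Finset.coe_filter, Finset.mem_univ, true_and, Set.mem_ofPred_eq] at hg ⊢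
    rw [mul_smul, mul_smul, ← hs, inv_smul_smul, hg, ← ht, inv_smul_smul]
  · intro g _; simp [mul_assoc]
  · intro g _; simp [mul_assoc]

variable [Fintype Y]

variable (Y) in
def deletedPermChar (g : G) : ℝ := #{y : Y | g • y = y} - 1

lemma sum_filter_deletedPermChar [Nonempty Y] [IsPretransitive G (X × Y)] (x x' : X) :
    ∑ g : G with g • x = x', deletedPermChar Y g = 0 := by
  obtain ⟨y₀⟩ := ‹Nonempty Y›
  -- both `∑ fix` and the number of terms are `|Y|` times the size of a fibre on pairs
  have hc : ∀ y y' : Y,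
      #{g : G | g • x = x' ∧ g • y = y'} = #{g : G | g • (x, y₀) = (x, y₀)} := by
    intro y y'
    rw [card_filter_smul_eq_eq (x, y₀) (x, y₀) (x, y) (x', y')]
    simp [Prod.ext_iff]
  have hfix : ∑ g : G with g • x = x', #{y : Y | g • y = y} =
      Fintype.card Y * #{g : G | g • (x, y₀) = (x, y₀)} := by
    simp only [Finset.card_filter]
    rw [Finset.sum_comm]
    simp [Finset.filter_filter, hc]
  have hcard : #{g : G | g • x = x'} =
      Fintype.card Y * #{g : G | g • (x, y₀) = (x, y₀)} := by
    rw [Finset.card_eq_sum_card_fiberwise (f := fun g : G => g • y₀) (t := Finset.univ)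
      (fun _ _ => Finset.mem_univ _)]
    simp [Finset.filter_filter, hc]
  simp only [deletedPermChar, Finset.sum_sub_distrib]
  rw [← Nat.cast_sum, hfix, Finset.sum_const, hcard]
  simp

lemma sum_deletedPermChar [Fintype X] [Nonempty X] [Nonempty Y] [IsPretransitive G (X × Y)] :
    ∑ g : G, deletedPermChar Y g = 0 := by
  obtain ⟨x⟩ := ‹Nonempty X›
  rw [← Finset.sum_fiberwise Finset.univ (fun g : G => g • x)]
  exact Finset.sum_eq_zero fun x' _ => sum_filter_deletedPermChar x x'

lemma sum_filter_deletedPermChar_pos [Nontrivial Y] (y : Y) :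
    0 < ∑ g : G with g • y = y, deletedPermChar Y g := by
  refine Finset.sum_pos' (fun g hg => ?_) ⟨1, by simp, ?_⟩
  · have hfix : 0 < #{y : Y | g • y = y} := Finset.card_pos.2 ⟨y, by simpa using hg⟩
    simpa [deletedPermChar] using hfix
  · simp [deletedPermChar, Fintype.one_lt_card]

end Counting

lemma mem_affKer_permRep_iff {n : ℕ} (π : G →* Equiv.Perm (Fin n)) (l : G → ℝ) :
    l ∈ affKer (permRep n π) ↔ (∀ i j, ∑ g with π g i = j, l g = 0) ∧ ∑ g, l g = 0 := by
  have hsum : ∑ g, l g • (permRep n π g : (Fin n → ℝ) →ₗ[ℝ] _) =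
      Matrix.toLin' (∑ g, l g • permMat n (π g)) := by
    simp only [map_sum, map_smul, Matrix.toLin'_apply']
    rfl
  have hentry : ∀ i j, (∑ g, l g • permMat n (π g)) i j = ∑ g with π g j = i, l g := by
    intro i j
    simp [permMat, Matrix.sum_apply, Finset.sum_filter, eq_comm]
  simp only [affKer, Set.mem_ofPred_eq, hsum, LinearEquiv.map_eq_zero_iff, ← Matrix.ext_iff,
    hentry, Matrix.zero_apply]
  exact and_congr_left' forall_comm

lemma mem_affKer_permRep_comp_toPermHom_iff {X : Type} [MulAction G X] [DecidableEq X] {n : ℕ}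
    (e : X ≃ Fin n) (l : G → ℝ) :
    l ∈ affKer (permRep n ((permCongrHom e).comp (toPermHom G X))) ↔
      (∀ x y : X, ∑ g with g • x = y, l g = 0) ∧ ∑ g, l g = 0 := by
  rw [mem_affKer_permRep_iff, e.symm.forall_congr_left]
  refine and_congr_left' (forall_congr' fun y => e.symm.forall_congr_left.trans ?_)
  simp [permCongrHom]

section StableEquivalence

variable {V W : Type} [AddCommGroup V] [Module ℝ V] [AddCommGroup W] [Module ℝ W]

lemma sum_smul_prodRep_apply (l : G → ℝ) (ρ : Representation ℝ G V) (σ : Representation ℝ G W)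
    (v : V × W) :
    (∑ g, l g • (prodRep ρ σ g : V × W →ₗ[ℝ] V × W)) v =
      ((∑ g, l g • (ρ g : V →ₗ[ℝ] V)) v.1, (∑ g, l g • (σ g : W →ₗ[ℝ] W)) v.2) := by
  simp only [LinearMap.sum_apply, LinearMap.smul_apply, Prod.ext_iff, Prod.fst_sum, Prod.snd_sum]
  exact ⟨rfl, rfl⟩

lemma affKer_prodRep (ρ : Representation ℝ G V) (σ : Representation ℝ G W) :
    affKer (prodRep ρ σ) = affKer ρ ∩ affKer σ := by
  ext l
  simp only [affKer, Set.mem_ofPred_eq, Set.mem_inter_iff, LinearMap.ext_iff, Prod.forall,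
    sum_smul_prodRep_apply, LinearMap.zero_apply, Prod.mk_eq_zero]
  exact ⟨fun ⟨h, hs⟩ => ⟨⟨fun v => (h v 0).1, hs⟩, fun w => (h 0 w).2, hs⟩,
    fun ⟨⟨h₁, hs⟩, h₂, _⟩ => ⟨fun v w => ⟨h₁ v, h₂ w⟩, hs⟩⟩

lemma RepIso.affKer_subset {ρ : Representation ℝ G V} {σ : Representation ℝ G W}
    (h : RepIso ρ σ) : affKer ρ ⊆ affKer σ := by
  obtain ⟨e, he⟩ := h
  rintro l ⟨hl, hsum⟩
  refine ⟨LinearMap.ext fun w => ?_, hsum⟩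
  obtain ⟨v, rfl⟩ := e.surjective w
  have := congrArg e (LinearMap.congr_fun hl v)
  simpa [LinearMap.sum_apply, he] using this

lemma StablyEquivalent.affKer_subset {ρ₁ : Representation ℝ G V} {ρ₂ : Representation ℝ G W}
    (h : StablyEquivalent ρ₁ ρ₂) : affKer ρ₁ ⊆ affKer ρ₂ := by
  obtain ⟨_, _, _, ρ₁', _, _, _, ρ₂', h₁, -, hiso⟩ := h
  intro l hl
  have := hiso.affKer_subset (by rw [affKer_prodRep]; exact ⟨hl, h₁ hl⟩)
  rw [affKer_prodRep] at this
  exact this.1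

end StableEquivalence

theorem not_stablyEquivalent_permRep_of_isPretransitive_prod {X Y : Type} [MulAction G X]
    [MulAction G Y] [Nonempty X] [Nontrivial Y] [IsPretransitive G (X × Y)] {n m : ℕ}
    (e₁ : X ≃ Fin n) (e₂ : Y ≃ Fin m) :
    ¬ StablyEquivalent (permRep n ((permCongrHom e₁).comp (toPermHom G X)))
      (permRep m ((permCongrHom e₂).comp (toPermHom G Y))) := by
  classical
  let _ : Fintype X := Fintype.ofEquiv _ e₁.symm
  let _ : Fintype Y := Fintype.ofEquiv _ e₂.symm
  intro h
  have hmem : deletedPermChar Y ∈ affKer (permRep n ((permCongrHom e₁).comp (toPermHom G X))) :=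
    (mem_affKer_permRep_comp_toPermHom_iff e₁ _).2
      ⟨sum_filter_deletedPermChar, sum_deletedPermChar (X := X)⟩
  obtain ⟨y⟩ : Nonempty Y := inferInstance
  exact (sum_filter_deletedPermChar_pos y).ne'
    (((mem_affKer_permRep_comp_toPermHom_iff e₂ _).1 (h.affKer_subset hmem)).1 y y)

theorem alt6_equal_polytopes_not_stablyEquivalent_general
    (H₁ H₂ : Subgroup ↥(alternatingGroup (Fin 6)))
    (hH₁ : ∀ g : ↥(alternatingGroup (Fin 6)),
      g ∈ H₁ ↔ ((g : Equiv.Perm (Fin 6)) 1 = 1))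
    (hH₂trans : ∀ x y : Fin 6, ∃ h ∈ H₂, ((h : ↥(alternatingGroup (Fin 6))) : Equiv.Perm (Fin 6)) x = y)
    (e₁ : (↥(alternatingGroup (Fin 6)) ⧸ H₁) ≃ Fin 6)
    (e₂ : (↥(alternatingGroup (Fin 6)) ⧸ H₂) ≃ Fin 6) :
    Function.Injective
      ((permCongrHom e₁).comp
        (MulAction.toPermHom ↥(alternatingGroup (Fin 6)) (↥(alternatingGroup (Fin 6)) ⧸ H₁))) ∧
    Function.Injective
      ((permCongrHom e₂).comp
        (MulAction.toPermHom ↥(alternatingGroup (Fin 6)) (↥(alternatingGroup (Fin 6)) ⧸ H₂))) ∧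
    ((permCongrHom e₁).comp
        (MulAction.toPermHom ↥(alternatingGroup (Fin 6)) (↥(alternatingGroup (Fin 6)) ⧸ H₁))).range
      = ((permCongrHom e₂).comp
        (MulAction.toPermHom ↥(alternatingGroup (Fin 6)) (↥(alternatingGroup (Fin 6)) ⧸ H₂))).range ∧
    convexHull ℝ (Set.range fun g : ↥(alternatingGroup (Fin 6)) =>
        permMat 6 (((permCongrHom e₁).comp
          (MulAction.toPermHom ↥(alternatingGroup (Fin 6)) (↥(alternatingGroup (Fin 6)) ⧸ H₁))) g))
      = convexHull ℝ (Set.range fun g : ↥(alternatingGroup (Fin 6)) =>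
        permMat 6 (((permCongrHom e₂).comp
          (MulAction.toPermHom ↥(alternatingGroup (Fin 6)) (↥(alternatingGroup (Fin 6)) ⧸ H₂))) g)) ∧
    convexHull ℝ (Set.range fun g : ↥(alternatingGroup (Fin 6)) =>
        permMat 6 (((permCongrHom e₁).comp
          (MulAction.toPermHom ↥(alternatingGroup (Fin 6)) (↥(alternatingGroup (Fin 6)) ⧸ H₁))) g))
      = convexHull ℝ {M : Matrix (Fin 6) (Fin 6) ℝ |
          ∃ σ ∈ alternatingGroup (Fin 6), M = permMat 6 σ} ∧
    ¬ StablyEquivalent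
        (permRep 6 ((permCongrHom e₁).comp
          (MulAction.toPermHom ↥(alternatingGroup (Fin 6)) (↥(alternatingGroup (Fin 6)) ⧸ H₁))))
        (permRep 6 ((permCongrHom e₂).comp
          (MulAction.toPermHom ↥(alternatingGroup (Fin 6)) (↥(alternatingGroup (Fin 6)) ⧸ H₂)))) := by
  have : IsSimpleGroup ↥(alternatingGroup (Fin 6)) := alternatingGroup.isSimpleGroup (by simp)
  have : Nontrivial (↥(alternatingGroup (Fin 6)) ⧸ H₁) := e₁.nontrivial
  have : Nontrivial (↥(alternatingGroup (Fin 6)) ⧸ H₂) := e₂.nontrivial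
  have hinj₁ : Function.Injective
      ((permCongrHom e₁).comp (toPermHom ↥(alternatingGroup (Fin 6)) _)) :=
    (permCongrHom_injective e₁).comp (injective_toPermHom_quotient H₁)
  have hinj₂ : Function.Injective
      ((permCongrHom e₂).comp (toPermHom ↥(alternatingGroup (Fin 6)) _)) :=
    (permCongrHom_injective e₂).comp (injective_toPermHom_quotient H₂)
  have hrange₁ := range_eq_alternatingGroup_of_injective _ hinj₁
  have hrange₂ := range_eq_alternatingGroup_of_injective _ hinj₂
  have : IsPretransitive ↥(alternatingGroup (Fin 6))
      ((↥(alternatingGroup (Fin 6)) ⧸ H₁) × (↥(alternatingGroup (Fin 6)) ⧸ H₂)) :=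
    isPretransitive_prod_quotient
      (exists_mul_eq_of_forall_mem_iff_smul_eq hH₁ (hH₂trans 1))
  refine ⟨hinj₁, hinj₂, hrange₁.trans hrange₂.symm, ?_, ?_,
    not_stablyEquivalent_permRep_of_isPretransitive_prod e₁ e₂⟩
  · rw [range_permMat_comp, range_permMat_comp, hrange₁, hrange₂]
  · rw [range_permMat_comp, hrange₁]

/-- The "almost example". Let `G = Alt(6)`, `H₁` the stabilizer of
the point `1`, and `H₂ ≅ Alt(5)` a transitive subgroup. The degree-6 permutation
representations `π₁`, `π₂` of `G` on `G/H₁` and `G/H₂` (read in `Sym(6)` via any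
identifications of the coset spaces with `{1,…,6}`) are faithful and have the same
image; their permutation polytopes coincide and equal the convex hull of the even
`6×6` permutation matrices; yet `π₁` and `π₂` are not stably equivalent. -/
theorem alt6_equal_polytopes_not_stablyEquivalent
    (H₁ H₂ : Subgroup ↥(alternatingGroup (Fin 6)))
    (hH₁ : ∀ g : ↥(alternatingGroup (Fin 6)),
      g ∈ H₁ ↔ ((g : Equiv.Perm (Fin 6)) 1 = 1))
    (hH₂iso : Nonempty (↥H₂ ≃* ↥(alternatingGroup (Fin 5))))
    (hH₂trans : ∀ x y : Fin 6, ∃ h ∈ H₂, ((h : ↥(alternatingGroup (Fin 6))) : Equiv.Perm (Fin 6)) x = y)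
    (e₁ : (↥(alternatingGroup (Fin 6)) ⧸ H₁) ≃ Fin 6)
    (e₂ : (↥(alternatingGroup (Fin 6)) ⧸ H₂) ≃ Fin 6) :
    Function.Injective
      ((permCongrHom e₁).comp
        (MulAction.toPermHom ↥(alternatingGroup (Fin 6)) (↥(alternatingGroup (Fin 6)) ⧸ H₁))) ∧
    Function.Injective
      ((permCongrHom e₂).comp
        (MulAction.toPermHom ↥(alternatingGroup (Fin 6)) (↥(alternatingGroup (Fin 6)) ⧸ H₂))) ∧
    ((permCongrHom e₁).comp
        (MulAction.toPermHom ↥(alternatingGroup (Fin 6)) (↥(alternatingGroup (Fin 6)) ⧸ H₁))).range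
      = ((permCongrHom e₂).comp
        (MulAction.toPermHom ↥(alternatingGroup (Fin 6)) (↥(alternatingGroup (Fin 6)) ⧸ H₂))).range ∧
    convexHull ℝ (Set.range fun g : ↥(alternatingGroup (Fin 6)) =>
        permMat 6 (((permCongrHom e₁).comp
          (MulAction.toPermHom ↥(alternatingGroup (Fin 6)) (↥(alternatingGroup (Fin 6)) ⧸ H₁))) g))
      = convexHull ℝ (Set.range fun g : ↥(alternatingGroup (Fin 6)) =>
        permMat 6 (((permCongrHom e₂).comp
          (MulAction.toPermHom ↥(alternatingGroup (Fin 6)) (↥(alternatingGroup (Fin 6)) ⧸ H₂))) g)) ∧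
    convexHull ℝ (Set.range fun g : ↥(alternatingGroup (Fin 6)) =>
        permMat 6 (((permCongrHom e₁).comp
          (MulAction.toPermHom ↥(alternatingGroup (Fin 6)) (↥(alternatingGroup (Fin 6)) ⧸ H₁))) g))
      = convexHull ℝ {M : Matrix (Fin 6) (Fin 6) ℝ |
          ∃ σ ∈ alternatingGroup (Fin 6), M = permMat 6 σ} ∧
    ¬ StablyEquivalent
        (permRep 6 ((permCongrHom e₁).comp
          (MulAction.toPermHom ↥(alternatingGroup (Fin 6)) (↥(alternatingGroup (Fin 6)) ⧸ H₁))))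
        (permRep 6 ((permCongrHom e₂).comp
          (MulAction.toPermHom ↥(alternatingGroup (Fin 6)) (↥(alternatingGroup (Fin 6)) ⧸ H₂)))) :=
  alt6_equal_polytopes_not_stablyEquivalent_general H₁ H₂ hH₁ hH₂trans e₁ e₂
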